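/- For two density matrices σ, ρ with eigenvalues p_1 ≥ p_2 ≥ ... ≥ p_d and q_1 ≥ q_2 ≥ ... ≥ q_d respectively, arranged in nonincreasing order, the trace norm satisfies ‖σ − ρ‖_1 ≥ Σ_{i=1}^d |p_i − q_i|. -/

import Mathlib

open ComplexOrder

/-- The trace norm of a complex matrix: the sum of its singular values, i.e. of the square
roots of the eigenvalues of `Aᴴ * A`. -/
noncomputable def traceNorm {n : Type*} [Fintype n] [DecidableEq n]
    (A : Matrix n n ℂ) : ℝ :=
  ∑ i, Real.sqrt ((Matrix.isHermitian_conjTranspose_mul_self A).eigenvalues i)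


section MirskyAux

open Matrix Polynomial

variable {d : ℕ}

lemma charpoly_unitary_conj (U : Matrix.unitaryGroup (Fin d) ℂ) (B : Matrix (Fin d) (Fin d) ℂ) :
    ((U : Matrix (Fin d) (Fin d) ℂ) * B * star (U : Matrix (Fin d) (Fin d) ℂ)).charpoly
      = B.charpoly := by
  have hUU : (U : Matrix (Fin d) (Fin d) ℂ) * star (U : Matrix (Fin d) (Fin d) ℂ) = 1 :=
    (Matrix.mem_unitaryGroup_iff).mp U.2
  set f := ((Polynomial.C : ℂ →+* ℂ[X]).mapMatrix : Matrix (Fin d) (Fin d) ℂ →+* Matrix (Fin d) (Fin d) ℂ[X])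
  have key : charmatrix ((U : Matrix (Fin d) (Fin d) ℂ) * B * star (U : Matrix (Fin d) (Fin d) ℂ))
      = f U * charmatrix B * f (star (U : Matrix (Fin d) (Fin d) ℂ)) := by
    simp only [charmatrix, mul_sub, sub_mul, _root_.map_mul]
    congr 1
    rw [mul_assoc, scalar_commute (X : ℂ[X]) (Commute.all _) _, ← mul_assoc, ← _root_.map_mul, hUU]
    simp
  have h1 : f (star (U : Matrix (Fin d) (Fin d) ℂ)) * f (U : Matrix (Fin d) (Fin d) ℂ) = 1 := by
    rw [← _root_.map_mul, show star (U : Matrix (Fin d) (Fin d) ℂ)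
      * (U : Matrix (Fin d) (Fin d) ℂ) = 1 from (Matrix.mem_unitaryGroup_iff').mp U.2]
    simp
  rw [Matrix.charpoly, key, det_mul, det_mul, Matrix.charpoly, mul_comm, ← mul_assoc,
    ← det_mul, h1]
  simp

lemma charpoly_hermitian {B : Matrix (Fin d) (Fin d) ℂ} (hB : B.IsHermitian) :
    B.charpoly = ∏ i, (X - C (hB.eigenvalues i : ℂ)) := by
  conv_lhs => rw [hB.spectral_theorem, Unitary.conjStarAlgAut_apply]
  rw [charpoly_unitary_conj]
  rw [Matrix.charpoly_of_upperTriangular _ (Matrix.blockTriangular_diagonal _)]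
  simp

/-- Eigenvalue multiset uniqueness. -/
lemma eigenvalues_multiset {B : Matrix (Fin d) (Fin d) ℂ} (hB : B.IsHermitian)
    (U : Matrix.unitaryGroup (Fin d) ℂ) (w : Fin d → ℝ)
    (hBU : B = (U : Matrix (Fin d) (Fin d) ℂ) * Matrix.diagonal ((↑) ∘ w)
      * star (U : Matrix (Fin d) (Fin d) ℂ)) :
    Multiset.map hB.eigenvalues Finset.univ.val = Multiset.map w Finset.univ.val := by
  have h1 : B.charpoly = ∏ i, (X - C (w i : ℂ)) := by
    rw [hBU, charpoly_unitary_conj,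
      Matrix.charpoly_of_upperTriangular _ (Matrix.blockTriangular_diagonal _)]
    simp
  have h2 := (charpoly_hermitian hB).symm.trans h1
  have h3 : (Multiset.map (fun i => (hB.eigenvalues i : ℂ)) Finset.univ.val)
      = Multiset.map (fun i => (w i : ℂ)) Finset.univ.val := by
    have r1 := Polynomial.roots_multiset_prod_X_sub_C
      (Multiset.map (fun i => (hB.eigenvalues i : ℂ)) Finset.univ.val)
    have r2 := Polynomial.roots_multiset_prod_X_sub_C
      (Multiset.map (fun i => (w i : ℂ)) Finset.univ.val)
    rw [← r1, ← r2]
    congr 1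
    simpa [Multiset.map_map, Finset.prod_eq_multiset_prod, Function.comp_def] using h2
  have := congrArg (Multiset.map Complex.re) h3
  simpa [Multiset.map_map, Function.comp_def] using this

lemma sum_eigenvalues_eq {B : Matrix (Fin d) (Fin d) ℂ} (hB : B.IsHermitian)
    (U : Matrix.unitaryGroup (Fin d) ℂ) (w : Fin d → ℝ)
    (hBU : B = (U : Matrix (Fin d) (Fin d) ℂ) * Matrix.diagonal ((↑) ∘ w)
      * star (U : Matrix (Fin d) (Fin d) ℂ)) (f : ℝ → ℝ) :
    ∑ i, f (hB.eigenvalues i) = ∑ i, f (w i) := by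
  have h := congrArg (fun m => (Multiset.map f m).sum) (eigenvalues_multiset hB U w hBU)
  simpa [Finset.sum, Multiset.map_map, Function.comp_def] using h


lemma traceNorm_hermitian {Δ : Matrix (Fin d) (Fin d) ℂ} (hΔ : Δ.IsHermitian) :
    traceNorm Δ = ∑ i, |hΔ.eigenvalues i| := by
  have hsq : Δᴴ * Δ = (hΔ.eigenvectorUnitary : Matrix (Fin d) (Fin d) ℂ)
      * Matrix.diagonal ((↑) ∘ fun i => hΔ.eigenvalues i ^ 2)
      * star (hΔ.eigenvectorUnitary : Matrix (Fin d) (Fin d) ℂ) := by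
    conv_lhs => rw [hΔ.eq, hΔ.spectral_theorem, Unitary.conjStarAlgAut_apply]
    set V := (hΔ.eigenvectorUnitary : Matrix (Fin d) (Fin d) ℂ)
    have hVV : star V * V = 1 := (Matrix.mem_unitaryGroup_iff').mp hΔ.eigenvectorUnitary.2
    set D := Matrix.diagonal ((RCLike.ofReal : ℝ → ℂ) ∘ hΔ.eigenvalues) with hD
    have : V * D * star V * (V * D * star V) = V * (D * D) * star V := by
      simp only [Matrix.mul_assoc]
      rw [← Matrix.mul_assoc (star V) V (D * star V), hVV, Matrix.one_mul]
    rw [this, hD, Matrix.diagonal_mul_diagonal]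
    have he : (fun i => (RCLike.ofReal ∘ hΔ.eigenvalues) i * (RCLike.ofReal ∘ hΔ.eigenvalues) i)
        = ((↑) ∘ fun i => hΔ.eigenvalues i ^ 2 : Fin d → ℂ) := by
      funext i
      show (hΔ.eigenvalues i : ℂ) * (hΔ.eigenvalues i : ℂ) = ((hΔ.eigenvalues i ^ 2 : ℝ) : ℂ)
      push_cast
      ring
    rw [he]
  rw [traceNorm, sum_eigenvalues_eq _ _ _ hsq]
  exact Finset.sum_congr rfl fun i _ => Real.sqrt_sq_eq_abs _

open Module in
lemma exists_mem_inf_ne_zero (W₁ W₂ : Submodule ℂ (Fin d → ℂ))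
    (h : d < finrank ℂ W₁ + finrank ℂ W₂) : ∃ x, x ≠ 0 ∧ x ∈ W₁ ⊓ W₂ := by
  have hsum := Submodule.finrank_sup_add_finrank_inf_eq W₁ W₂
  have hle : finrank ℂ ↥(W₁ ⊔ W₂) ≤ d := by
    simpa using (Submodule.finrank_le (W₁ ⊔ W₂))
  have hpos : 0 < finrank ℂ ↥(W₁ ⊓ W₂) := by omega
  have hne : W₁ ⊓ W₂ ≠ ⊥ := by
    intro hbot
    rw [hbot] at hpos
    simp at hpos
  obtain ⟨x, hx, hx0⟩ := Submodule.ne_bot_iff _ |>.mp hne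
  exact ⟨x, hx0, hx⟩

noncomputable def coordSub (S : Finset (Fin d)) : Submodule ℂ (Fin d → ℂ) where
  carrier := {y | ∀ i, i ∉ S → y i = 0}
  add_mem' := fun ha hb i hi => by simp [ha i hi, hb i hi]
  zero_mem' := fun i _ => rfl
  smul_mem' := fun c y hy i hi => by simp [hy i hi]

lemma mem_coordSub {S : Finset (Fin d)} {y : Fin d → ℂ} :
    y ∈ coordSub S ↔ ∀ i, i ∉ S → y i = 0 := Iff.rfl

noncomputable def coordSubEquiv (S : Finset (Fin d)) : coordSub S ≃ₗ[ℂ] (↥S → ℂ) where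
  toFun y i := y.1 i
  map_add' _ _ := rfl
  map_smul' _ _ := rfl
  invFun c := ⟨fun i => if h : i ∈ S then c ⟨i, h⟩ else 0, fun i hi => by simp [hi]⟩
  left_inv y := by
    ext i
    by_cases h : i ∈ S
    · simp [h]
    · simp [h, y.2 i h]
  right_inv c := by
    ext i
    simp [i.2]

lemma finrank_coordSub (S : Finset (Fin d)) : Module.finrank ℂ (coordSub S) = S.card := by
  rw [LinearEquiv.finrank_eq (coordSubEquiv S), Module.finrank_pi, Fintype.card_coe]

noncomputable def unitaryMulEquiv (U : Matrix.unitaryGroup (Fin d) ℂ) :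
    (Fin d → ℂ) ≃ₗ[ℂ] (Fin d → ℂ) :=
  LinearEquiv.ofLinear (Matrix.mulVecLin (star (U : Matrix (Fin d) (Fin d) ℂ)))
    (Matrix.mulVecLin (U : Matrix (Fin d) (Fin d) ℂ))
    (by rw [← Matrix.mulVecLin_mul, (Matrix.mem_unitaryGroup_iff').mp U.2, Matrix.mulVecLin_one])
    (by rw [← Matrix.mulVecLin_mul, (Matrix.mem_unitaryGroup_iff).mp U.2, Matrix.mulVecLin_one])

lemma finrank_comap_unitary (U : Matrix.unitaryGroup (Fin d) ℂ) (S : Finset (Fin d)) :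
    Module.finrank ℂ
      (Submodule.comap (Matrix.mulVecLin (star (U : Matrix (Fin d) (Fin d) ℂ))) (coordSub S))
      = S.card := by
  have : Submodule.comap (Matrix.mulVecLin (star (U : Matrix (Fin d) (Fin d) ℂ))) (coordSub S)
      = Submodule.comap (unitaryMulEquiv U : (Fin d → ℂ) →ₗ[ℂ] (Fin d → ℂ)) (coordSub S) := rfl
  rw [this, Submodule.comap_equiv_eq_map_symm, LinearEquiv.finrank_map_eq, finrank_coordSub]

lemma dot_star_eq {U : Matrix.unitaryGroup (Fin d) ℂ} (x z : Fin d → ℂ) :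
    star x ⬝ᵥ ((U : Matrix (Fin d) (Fin d) ℂ) *ᵥ z)
      = star (star (U : Matrix (Fin d) (Fin d) ℂ) *ᵥ x) ⬝ᵥ z := by
  rw [Matrix.star_mulVec, Matrix.dotProduct_mulVec]
  congr 1
  simp [Matrix.star_eq_conjTranspose]

lemma quad_eq {A : Matrix (Fin d) (Fin d) ℂ} (hA : A.IsHermitian) (x : Fin d → ℂ) :
    star x ⬝ᵥ (A *ᵥ x) = ∑ i, (hA.eigenvalues i : ℂ)
      * Complex.normSq ((star (hA.eigenvectorUnitary : Matrix (Fin d) (Fin d) ℂ) *ᵥ x) i) := by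
  set U := hA.eigenvectorUnitary
  set y := star (U : Matrix (Fin d) (Fin d) ℂ) *ᵥ x with hy
  have hAx : A *ᵥ x = (U : Matrix (Fin d) (Fin d) ℂ) *ᵥ
      (Matrix.diagonal ((RCLike.ofReal : ℝ → ℂ) ∘ hA.eigenvalues) *ᵥ y) := by
    conv_lhs => rw [hA.spectral_theorem, Unitary.conjStarAlgAut_apply]
    rw [← Matrix.mulVec_mulVec, ← Matrix.mulVec_mulVec]
  rw [hAx, dot_star_eq, ← hy]
  simp only [dotProduct, Matrix.mulVec_diagonal, Pi.star_apply]
  refine Finset.sum_congr rfl fun i _ => ?_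
  rw [Complex.normSq_eq_conj_mul_self]
  simp only [Function.comp_apply, RCLike.star_def,
    show (RCLike.ofReal : ℝ → ℂ) = Complex.ofReal from rfl]
  ring

lemma norm_eq {U : Matrix.unitaryGroup (Fin d) ℂ} (x : Fin d → ℂ) :
    star x ⬝ᵥ x = ∑ i, (Complex.normSq ((star (U : Matrix (Fin d) (Fin d) ℂ) *ᵥ x) i) : ℂ) := by
  set y := star (U : Matrix (Fin d) (Fin d) ℂ) *ᵥ x with hy
  have : star x ⬝ᵥ x = star y ⬝ᵥ y := by
    rw [hy, Matrix.star_mulVec, Matrix.dotProduct_mulVec, Matrix.vecMul_vecMul]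
    rw [show (star (U : Matrix (Fin d) (Fin d) ℂ))ᴴ * star (U : Matrix (Fin d) (Fin d) ℂ) = 1 by
      simp only [Matrix.star_eq_conjTranspose, Matrix.conjTranspose_conjTranspose]
      exact (Matrix.mem_unitaryGroup_iff).mp U.2]
    rw [Matrix.vecMul_one]
  rw [this, dotProduct]
  congr 1
  funext i
  simp [Complex.normSq_eq_conj_mul_self]

lemma weyl_mono {A C : Matrix (Fin d) (Fin d) ℂ} (hA : A.IsHermitian) (hC : C.IsHermitian)
    (hle : (C - A).PosSemidef) {p r : Fin d → ℝ} (eA eC : Equiv.Perm (Fin d))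
    (hpA : p = hA.eigenvalues ∘ eA) (hrC : r = hC.eigenvalues ∘ eC)
    (hpa : Antitone p) (hra : Antitone r) (k : Fin d) : p k ≤ r k := by
  classical
  set UA := hA.eigenvectorUnitary
  set UC := hC.eigenvectorUnitary
  set S₁ : Finset (Fin d) := Finset.image eA (Finset.Iic k) with hS₁
  set S₂ : Finset (Fin d) := Finset.image eC (Finset.Ici k) with hS₂
  have hcard₁ : S₁.card = (Finset.Iic k).card :=
    Finset.card_image_of_injective _ eA.injective
  have hcard₂ : S₂.card = (Finset.Ici k).card :=
    Finset.card_image_of_injective _ eC.injective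
  set W₁ := Submodule.comap (Matrix.mulVecLin (star (UA : Matrix (Fin d) (Fin d) ℂ)))
    (coordSub S₁)
  set W₂ := Submodule.comap (Matrix.mulVecLin (star (UC : Matrix (Fin d) (Fin d) ℂ)))
    (coordSub S₂)
  have hdim : d < Module.finrank ℂ W₁ + Module.finrank ℂ W₂ := by
    rw [show Module.finrank ℂ W₁ = S₁.card from finrank_comap_unitary _ _,
      show Module.finrank ℂ W₂ = S₂.card from finrank_comap_unitary _ _, hcard₁, hcard₂]
    rw [Fin.card_Iic, Fin.card_Ici]
    have := k.isLt
    omega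
  obtain ⟨x, hx0, hxW⟩ := exists_mem_inf_ne_zero W₁ W₂ hdim
  set yA := star (UA : Matrix (Fin d) (Fin d) ℂ) *ᵥ x with hyA
  set yC := star (UC : Matrix (Fin d) (Fin d) ℂ) *ᵥ x with hyC
  have hyAmem : ∀ i, i ∉ S₁ → yA i = 0 := hxW.1
  have hyCmem : ∀ i, i ∉ S₂ → yC i = 0 := hxW.2
  -- norms agree
  set N : ℝ := ∑ i, Complex.normSq (yA i) with hN
  have hNC : (∑ i, Complex.normSq (yC i)) = N := by
    have h1 := (norm_eq (U := UA) x).symm.trans (norm_eq (U := UC) x)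
    have : ((N : ℂ)) = ((∑ i, Complex.normSq (yC i) : ℝ) : ℂ) := by
      rw [hN]
      push_cast
      exact h1
    exact_mod_cast this.symm
  -- N is positive
  have hNpos : 0 < N := by
    have hx2 : star x ⬝ᵥ x = ((∑ i, Complex.normSq (x i) : ℝ) : ℂ) := by
      push_cast
      simp [dotProduct, Complex.normSq_eq_conj_mul_self]
    have hx2' : star x ⬝ᵥ x = ((N : ℝ) : ℂ) := by
      rw [norm_eq (U := UA) x, hN]
      push_cast
      rfl
    have hsum : (∑ i, Complex.normSq (x i)) = N := by
      have := hx2.symm.trans hx2'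
      exact_mod_cast this
    rw [← hsum]
    obtain ⟨j, hj⟩ := Function.ne_iff.mp hx0
    exact Finset.sum_pos' (fun i _ => Complex.normSq_nonneg _)
      ⟨j, Finset.mem_univ j, Complex.normSq_pos.mpr hj⟩
  -- Rayleigh quotient identities, real form
  have hQA : (star x ⬝ᵥ (A *ᵥ x)) = ((∑ i, hA.eigenvalues i * Complex.normSq (yA i) : ℝ) : ℂ) := by
    rw [quad_eq hA x]
    push_cast
    rfl
  have hQC : (star x ⬝ᵥ (C *ᵥ x)) = ((∑ i, hC.eigenvalues i * Complex.normSq (yC i) : ℝ) : ℂ) := by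
    rw [quad_eq hC x]
    push_cast
    rfl
  -- psd comparison
  have hcmp : (∑ i, hA.eigenvalues i * Complex.normSq (yA i))
      ≤ (∑ i, hC.eigenvalues i * Complex.normSq (yC i)) := by
    have h0 := hle.dotProduct_mulVec_nonneg x
    rw [Matrix.sub_mulVec, dotProduct_sub, hQA, hQC] at h0
    rw [← Complex.ofReal_sub] at h0
    have := (Complex.zero_le_real).mp h0
    linarith
  -- lower bound for A
  have hlowA : p k * N ≤ ∑ i, hA.eigenvalues i * Complex.normSq (yA i) := by
    rw [hN, Finset.mul_sum]
    refine Finset.sum_le_sum fun i _ => ?_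
    by_cases hi : i ∈ S₁
    · obtain ⟨j, hj, rfl⟩ := Finset.mem_image.mp hi
      have : p k ≤ hA.eigenvalues (eA j) := by
        have := hpa (Finset.mem_Iic.mp hj)
        rw [hpA] at this ⊢
        exact this
      exact mul_le_mul_of_nonneg_right this (Complex.normSq_nonneg _)
    · rw [hyAmem i hi]
      simp
  -- upper bound for C
  have hhighC : (∑ i, hC.eigenvalues i * Complex.normSq (yC i)) ≤ r k * N := by
    rw [← hNC, Finset.mul_sum]
    refine Finset.sum_le_sum fun i _ => ?_
    by_cases hi : i ∈ S₂
    · obtain ⟨j, hj, rfl⟩ := Finset.mem_image.mp hi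
      have : hC.eigenvalues (eC j) ≤ r k := by
        have := hra (Finset.mem_Ici.mp hj)
        rw [hrC] at this ⊢
        exact this
      exact mul_le_mul_of_nonneg_right this (Complex.normSq_nonneg _)
    · rw [hyCmem i hi]
      simp
  have : p k * N ≤ r k * N := le_trans hlowA (le_trans hcmp hhighC)
  exact le_of_mul_le_mul_right (by linarith [this]) hNpos

lemma trace_conj_diag (U : Matrix.unitaryGroup (Fin d) ℂ) (w : Fin d → ℝ) :
    ((U : Matrix (Fin d) (Fin d) ℂ) * Matrix.diagonal ((RCLike.ofReal : ℝ → ℂ) ∘ w)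
      * star (U : Matrix (Fin d) (Fin d) ℂ)).trace = ((∑ i, w i : ℝ) : ℂ) := by
  rw [Matrix.trace_mul_comm, ← Matrix.mul_assoc,
    show star (U : Matrix (Fin d) (Fin d) ℂ) * (U : Matrix (Fin d) (Fin d) ℂ) = 1 from
      (Matrix.mem_unitaryGroup_iff').mp U.2, Matrix.one_mul, Matrix.trace_diagonal]
  push_cast
  rfl

lemma trace_hermitian {B : Matrix (Fin d) (Fin d) ℂ} (hB : B.IsHermitian) :
    B.trace = ((∑ i, hB.eigenvalues i : ℝ) : ℂ) := by
  conv_lhs => rw [hB.spectral_theorem]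
  exact trace_conj_diag hB.eigenvectorUnitary _

theorem sum_abs_eigenvalues_sub_le_traceNorm_aux {d : ℕ} (σ ρ : Matrix (Fin d) (Fin d) ℂ)
    (hσ : σ.PosSemidef) (hσ1 : σ.trace = 1) (hρ : ρ.PosSemidef) (hρ1 : ρ.trace = 1)
    (p q : Fin d → ℝ) (hpa : Antitone p) (hqa : Antitone q)
    (hp : ∃ e : Equiv.Perm (Fin d), p = hσ.1.eigenvalues ∘ e)
    (hq : ∃ e : Equiv.Perm (Fin d), q = hρ.1.eigenvalues ∘ e) :
    ∑ i, |p i - q i| ≤ traceNorm (σ - ρ) := by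
  classical
  obtain ⟨eσ, hpe⟩ := hp
  obtain ⟨eρ, hqe⟩ := hq
  have hΔ : (σ - ρ).IsHermitian := hσ.1.sub hρ.1
  set μ := hΔ.eigenvalues with hμ
  set U := hΔ.eigenvectorUnitary with hU
  set μp : Fin d → ℝ := fun i => max (μ i) 0 with hμp
  set μm : Fin d → ℝ := fun i => max (-(μ i)) 0 with hμm
  set Δp := (U : Matrix (Fin d) (Fin d) ℂ) * Matrix.diagonal ((RCLike.ofReal : ℝ → ℂ) ∘ μp)
    * star (U : Matrix (Fin d) (Fin d) ℂ) with hΔp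
  set Δm := (U : Matrix (Fin d) (Fin d) ℂ) * Matrix.diagonal ((RCLike.ofReal : ℝ → ℂ) ∘ μm)
    * star (U : Matrix (Fin d) (Fin d) ℂ) with hΔm
  have hreal : ∀ i, μp i - μm i = μ i := by
    intro i
    simp only [hμp, hμm, max_def]
    split <;> split <;> linarith
  have hsub : Δp - Δm = σ - ρ := by
    rw [hΔp, hΔm, ← Matrix.sub_mul, ← Matrix.mul_sub]
    have hdd : Matrix.diagonal ((RCLike.ofReal : ℝ → ℂ) ∘ μp)
          - Matrix.diagonal ((RCLike.ofReal : ℝ → ℂ) ∘ μm)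
        = (Matrix.diagonal (RCLike.ofReal ∘ μ) : Matrix (Fin d) (Fin d) ℂ) := by
      ext i j
      by_cases h : i = j
      · subst h
        simp only [Matrix.sub_apply, Matrix.diagonal_apply_eq, Function.comp_apply,
          show (RCLike.ofReal : ℝ → ℂ) = Complex.ofReal from rfl, ← Complex.ofReal_sub]
        exact_mod_cast hreal i
      · simp [Matrix.diagonal_apply_ne _ h]
    rw [hdd]
    exact hΔ.spectral_theorem.symm
  have hΔppsd : Δp.PosSemidef := by
    have hdpsd : (Matrix.diagonal ((RCLike.ofReal : ℝ → ℂ) ∘ μp)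
        : Matrix (Fin d) (Fin d) ℂ).PosSemidef :=
      Matrix.posSemidef_diagonal_iff.mpr fun i =>
        Complex.zero_le_real.mpr (le_max_right _ _)
    exact hdpsd.mul_mul_conjTranspose_same _
  have hΔmpsd : Δm.PosSemidef := by
    have hdpsd : (Matrix.diagonal ((RCLike.ofReal : ℝ → ℂ) ∘ μm)
        : Matrix (Fin d) (Fin d) ℂ).PosSemidef :=
      Matrix.posSemidef_diagonal_iff.mpr fun i =>
        Complex.zero_le_real.mpr (le_max_right _ _)
    exact hdpsd.mul_mul_conjTranspose_same _
  set C := ρ + Δp with hCdef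
  have hC : C.IsHermitian := hρ.1.add hΔppsd.1
  have hCρ : (C - ρ).PosSemidef := by
    rw [hCdef, add_sub_cancel_left]
    exact hΔppsd
  have hCσ : (C - σ).PosSemidef := by
    have h5 : Δp = σ - ρ + Δm := by rw [← hsub]; abel
    have h6 : C - σ = Δm := by rw [hCdef, h5]; abel
    rw [h6]
    exact hΔmpsd
  set ν := hC.eigenvalues with hν
  set eC : Equiv.Perm (Fin d) := (Fin.revPerm).trans (Tuple.sort ν) with heC
  set r : Fin d → ℝ := ν ∘ eC with hr
  have hra : Antitone r := by
    intro i j hij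
    have := Tuple.monotone_sort ν (Fin.rev_le_rev.mpr hij)
    simpa [hr, heC] using this
  have hpr : ∀ k, p k ≤ r k := fun k =>
    weyl_mono hσ.1 hC hCσ eσ eC hpe rfl hpa hra k
  have hqr : ∀ k, q k ≤ r k := fun k =>
    weyl_mono hρ.1 hC hCρ eρ eC hqe rfl hqa hra k
  -- sums
  have hsum_p : ∑ i, p i = 1 := by
    have h1 : σ.trace = ((∑ i, hσ.1.eigenvalues i : ℝ) : ℂ) := trace_hermitian hσ.1
    rw [hσ1] at h1
    have h2 : (∑ i, hσ.1.eigenvalues i) = 1 := by exact_mod_cast h1.symm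
    rw [hpe, ← h2]
    exact Equiv.sum_comp eσ _
  have hsum_q : ∑ i, q i = 1 := by
    have h1 : ρ.trace = ((∑ i, hρ.1.eigenvalues i : ℝ) : ℂ) := trace_hermitian hρ.1
    rw [hρ1] at h1
    have h2 : (∑ i, hρ.1.eigenvalues i) = 1 := by exact_mod_cast h1.symm
    rw [hqe, ← h2]
    exact Equiv.sum_comp eρ _
  have hsum_r : ∑ i, r i = 1 + ∑ i, μp i := by
    have h1 : C.trace = ((∑ i, ν i : ℝ) : ℂ) := trace_hermitian hC
    have h2 : C.trace = 1 + ((∑ i, μp i : ℝ) : ℂ) := by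
      rw [hCdef, Matrix.trace_add, hρ1, hΔp, trace_conj_diag]
    have h3 : ((∑ i, ν i : ℝ) : ℂ) = ((1 + ∑ i, μp i : ℝ) : ℂ) := by
      rw [← h1, h2]
      push_cast
      ring
    have h4 : (∑ i, ν i) = 1 + ∑ i, μp i := by exact_mod_cast h3
    rw [hr, ← h4]
    exact Equiv.sum_comp eC _
  have hsum_μ : ∑ i, μ i = 0 := by
    have h1 : (σ - ρ).trace = ((∑ i, μ i : ℝ) : ℂ) := trace_hermitian hΔ
    rw [Matrix.trace_sub, hσ1, hρ1, sub_self] at h1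
    exact_mod_cast h1.symm
  have hμpm : ∑ i, μp i + ∑ i, μm i = ∑ i, |μ i| := by
    rw [← Finset.sum_add_distrib]
    refine Finset.sum_congr rfl fun i _ => ?_
    simp [hμp, hμm, abs_eq_max_neg, max_def]
    split <;> split <;> linarith
  have hμpm2 : ∑ i, μp i - ∑ i, μm i = 0 := by
    rw [← hsum_μ, ← Finset.sum_sub_distrib]
    refine Finset.sum_congr rfl fun i _ => ?_
    simp [hμp, hμm, max_def]
    split <;> split <;> linarith
  have htn : traceNorm (σ - ρ) = 2 * ∑ i, μp i := by
    rw [traceNorm_hermitian hΔ, ← hμpm]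
    linarith
  calc ∑ i, |p i - q i| ≤ ∑ i, (2 * r i - p i - q i) := by
        refine Finset.sum_le_sum fun i _ => ?_
        rw [abs_sub_le_iff]
        constructor <;> [linarith [hpr i, hqr i]; linarith [hpr i, hqr i]]
    _ = 2 * ∑ i, r i - ∑ i, p i - ∑ i, q i := by
        rw [Finset.sum_sub_distrib, Finset.sum_sub_distrib, ← Finset.mul_sum]
    _ = traceNorm (σ - ρ) := by
        rw [hsum_p, hsum_q, hsum_r, htn]
        ring


end MirskyAux

/-- **Mirsky's inequality for density matrices.** If `p` and `q` are the
eigenvalues of the density matrices `σ` and `ρ`, each arranged in nonincreasing order,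
then `‖σ − ρ‖₁ ≥ Σ_i |p_i − q_i|`. -/
theorem sum_abs_eigenvalues_sub_le_traceNorm {d : ℕ} (σ ρ : Matrix (Fin d) (Fin d) ℂ)
    (hσ : σ.PosSemidef) (hσ1 : σ.trace = 1) (hρ : ρ.PosSemidef) (hρ1 : ρ.trace = 1)
    (p q : Fin d → ℝ) (hpa : Antitone p) (hqa : Antitone q)
    (hp : ∃ e : Equiv.Perm (Fin d), p = hσ.1.eigenvalues ∘ e)
    (hq : ∃ e : Equiv.Perm (Fin d), q = hρ.1.eigenvalues ∘ e) :
    ∑ i, |p i - q i| ≤ traceNorm (σ - ρ) := by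
  exact sum_abs_eigenvalues_sub_le_traceNorm_aux σ ρ hσ hσ1 hρ hρ1 p q hpa hqa hp hq
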